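/- arXiv:2305.01940 — 4 statements merged into one kernel-verified Lean document; each statement's English description precedes it below -/
import Mathlib

section
/- Let C5 be the 5-cycle with vertices y1,y4,y2,y3,y5 in cyclic order and let J be its vertex cover ideal (generated by y1*y2*y5, y2*y4*y5, y1*y2*y3, y1*y3*y4, y3*y4*y5). Then the monomial g = y1*y2*y3*y4^2*y5 is a minimal monomial generator of J^2, and it cannot be written as a product g = g1'*g2' of two generators of J with {y1,y2,y5} contained in the support of g1' or g2'. -/
/-- The exponent vectors of the five generators of the vertex cover ideal `J` of the
5-cycle with vertices `y1,y4,y2,y3,y5` in cyclic order (`y i` is coordinate `i - 1`):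
`y1*y2*y5, y2*y4*y5, y1*y2*y3, y1*y3*y4, y3*y4*y5`. -/
def gen : Fin 5 → (Fin 5 → ℕ) :=
  ![![1, 1, 0, 0, 1], ![0, 1, 0, 1, 1], ![1, 1, 1, 0, 0], ![1, 0, 1, 1, 0], ![0, 0, 1, 1, 1]]

/-- A monomial (given by its exponent vector) lies in `J^2` iff it is divisible by the
product of two of the generators. -/
def MemJsq (m : Fin 5 → ℕ) : Prop :=
  ∃ i j : Fin 5, gen i + gen j ≤ m

/-- `m` is a minimal monomial generator of `J^2`: it lies in `J^2` and no monomial of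
`J^2` properly divides it. -/
def IsMinGenJsq (m : Fin 5 → ℕ) : Prop :=
  MemJsq m ∧ ∀ m' : Fin 5 → ℕ, MemJsq m' → m' ≤ m → m' = m

/-- The support of a monomial: the set of variables dividing it. -/
def msupp (m : Fin 5 → ℕ) : Set (Fin 5) := {v | m v ≠ 0}

/-- The monomial `g = y1*y2*y3*y4^2*y5` is a minimal monomial generator of `J^2`, and it
cannot be written as a product of two generators of `J` one of which has
`{y1, y2, y5}` contained in its support. -/
theorem g_minGen_and_no_good_factorization (g : Fin 5 → ℕ)
    (hg : g = ![1, 1, 1, 2, 1]) :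
    IsMinGenJsq g ∧
      ¬ ∃ i j : Fin 5, g = gen i + gen j ∧
        (({0, 1, 4} : Set (Fin 5)) ⊆ msupp (gen i) ∨
          ({0, 1, 4} : Set (Fin 5)) ⊆ msupp (gen j)) := by
  subst hg
  refine ⟨⟨⟨1, 3, by rw [Pi.le_def]; decide⟩, ?_⟩, ?_⟩
  · rintro m' ⟨i, j, hij⟩ hm'
    have h := le_trans hij hm'
    rw [Pi.le_def] at h
    have heq : gen i + gen j = ![1, 1, 1, 2, 1] := by
      fin_cases i <;> fin_cases j <;> first
        | decide
        | (exfalso; revert h; decide)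
    exact le_antisymm hm' (heq ▸ hij)
  · rintro ⟨i, j, heq, h⟩
    have heq' : gen i + gen j = ![1, 1, 1, 2, 1] := heq.symm
    have hs : ∀ k : Fin 5, (({0, 1, 4} : Set (Fin 5)) ⊆ msupp (gen k)) →
        gen k 0 ≠ 0 ∧ gen k 1 ≠ 0 ∧ gen k 4 ≠ 0 := by
      intro k hk
      exact ⟨hk (by simp), hk (by simp), hk (by simp)⟩
    rcases h with h | h
    · have := hs i h
      fin_cases i <;> fin_cases j <;> revert heq' this <;> decide
    · have := hs j h
      fin_cases i <;> fin_cases j <;> revert heq' this <;> decide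
end

section
/- Let G be a graph containing an induced 5-cycle C on vertices y1,y4,y2,y3,y5 (in cyclic order) such that y3, y4, y5 have degree 2 in G. Then every minimal vertex cover of G contains exactly one of the sets {y1,y2,y5}, {y2,y4,y5}, {y1,y2,y3}, {y1,y3,y4}, {y3,y4,y5}. -/
/-- `C` is a vertex cover of `G`: every edge has at least one endpoint in `C`. -/
def IsVC {V : Type*} (G : SimpleGraph V) (C : Set V) : Prop :=
  ∀ ⦃u v : V⦄, G.Adj u v → u ∈ C ∨ v ∈ C

/-- `C` is a minimal vertex cover of `G`. -/
def IsMinVC {V : Type*} (G : SimpleGraph V) (C : Set V) : Prop :=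
  IsVC G C ∧ ∀ D : Set V, D ⊂ C → ¬ IsVC G D

/-- Let `G` contain an induced 5-cycle on `y1,y4,y2,y3,y5` (cyclic order) such that the
only edges of `G` incident to `y3,y4,y5` are the cycle edges (so `y3,y4,y5` have
degree 2 in `G`).  Then every minimal vertex cover of `G` contains exactly one of the
sets `{y1,y2,y5}, {y2,y4,y5}, {y1,y2,y3}, {y1,y3,y4}, {y3,y4,y5}`. -/
theorem minVC_contains_exactly_one {V : Type*} (G : SimpleGraph V)
    (y1 y2 y3 y4 y5 : V)
    (hne : List.Pairwise Ne [y1, y2, y3, y4, y5])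
    (h14 : G.Adj y1 y4) (h42 : G.Adj y4 y2) (h23 : G.Adj y2 y3)
    (h35 : G.Adj y3 y5) (h51 : G.Adj y5 y1)
    (h12 : ¬ G.Adj y1 y2)
    (hy3 : ∀ z, G.Adj y3 z → z = y2 ∨ z = y5)
    (hy4 : ∀ z, G.Adj y4 z → z = y1 ∨ z = y2)
    (hy5 : ∀ z, G.Adj y5 z → z = y3 ∨ z = y1)
    (C : Set V) (hC : IsMinVC G C) :
    ∃! i : Fin 5,
      (![({y1, y2, y5} : Set V), {y2, y4, y5}, {y1, y2, y3}, {y1, y3, y4},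
        {y3, y4, y5}] i) ⊆ C := by
  obtain ⟨hCvc, hmin⟩ := hC
  -- key: a degree-2 vertex in C with both neighbors in C contradicts minimality
  have key : ∀ v a b : V, v ∈ C → (∀ z, G.Adj v z → z = a ∨ z = b) →
      a ∈ C → b ∈ C → False := by
    intro v a b hv hdeg ha hb
    refine hmin (C \ {v}) (Set.sdiff_singleton_ssubset.mpr hv) ?_
    intro u w huw
    by_cases hu : u = v
    · subst hu
      rcases hdeg w huw with rfl | rfl
      · exact Or.inr ⟨ha, fun h => G.irrefl (h ▸ huw)⟩
      · exact Or.inr ⟨hb, fun h => G.irrefl (h ▸ huw)⟩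
    · by_cases hw : w = v
      · subst hw
        rcases hdeg u huw.symm with rfl | rfl
        · exact Or.inl ⟨ha, hu⟩
        · exact Or.inl ⟨hb, hu⟩
      · rcases hCvc huw with h | h
        · exact Or.inl ⟨h, hu⟩
        · exact Or.inr ⟨h, hw⟩
  have k3 : ¬ (y3 ∈ C ∧ y2 ∈ C ∧ y5 ∈ C) :=
    fun ⟨a, b, c⟩ => key y3 y2 y5 a hy3 b c
  have k4 : ¬ (y4 ∈ C ∧ y1 ∈ C ∧ y2 ∈ C) :=
    fun ⟨a, b, c⟩ => key y4 y1 y2 a hy4 b c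
  have k5 : ¬ (y5 ∈ C ∧ y3 ∈ C ∧ y1 ∈ C) :=
    fun ⟨a, b, c⟩ => key y5 y3 y1 a hy5 b c
  have hex : ∃ i : Fin 5,
      (![({y1, y2, y5} : Set V), {y2, y4, y5}, {y1, y2, y3}, {y1, y3, y4},
        {y3, y4, y5}] i) ⊆ C := by
    by_cases h1 : y1 ∈ C
    · by_cases h2 : y2 ∈ C
      · rcases hCvc h35 with h3 | h5
        · exact ⟨2, by simp [Set.insert_subset_iff, h1, h2, h3]⟩
        · exact ⟨0, by simp [Set.insert_subset_iff, h1, h2, h5]⟩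
      · have h4 := (hCvc h42).resolve_right h2
        have h3 := (hCvc h23).resolve_left h2
        exact ⟨3, by simp [Set.insert_subset_iff, h1, h3, h4]⟩
    · have h4 := (hCvc h14).resolve_left h1
      have h5 := (hCvc h51).resolve_right h1
      rcases hCvc h23 with h2 | h3
      · exact ⟨1, by simp [Set.insert_subset_iff, h2, h4, h5]⟩
      · exact ⟨4, by simp [Set.insert_subset_iff, h3, h4, h5]⟩
  obtain ⟨i, hi⟩ := hex
  have get : ∀ (a b c : V), ({a, b, c} : Set V) ⊆ C → a ∈ C ∧ b ∈ C ∧ c ∈ C := by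
    intro a b c h
    exact ⟨h (by simp), h (by simp), h (by simp)⟩
  refine ⟨i, hi, fun j hj => ?_⟩
  fin_cases i <;> fin_cases j <;>
    first
      | rfl
      | (obtain ⟨p1, p2, p3⟩ := get _ _ _ hi
         obtain ⟨q1, q2, q3⟩ := get _ _ _ hj
         tauto)
end

section
/- Let G be a connected graph in which every edge belongs to at most one cycle (a cactus graph), containing a basic 5-cycle C with vertices y1,y4,y2,y3,y5 in cyclic order where y3,y4,y5 have degree 2 in G. Let T be the induced subgraph of G on V(G)\{y3,y4,y5}, and for a in {1,2} let T_a be the set of vertices z in V(T)\{y1,y2} for which there is a path in T connecting z to y_a. Then T_1 and T_2 are disjoint, and V(T) is the disjoint union of T_1, {y1,y2}, and T_2. -/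
/-- The graph obtained from `G` by deleting the vertices in `s` (keeping the ambient
vertex type): the induced subgraph of `G` on `V(G) \ s`. -/
def delGraph {V : Type*} (G : SimpleGraph V) (s : Set V) : SimpleGraph V where
  Adj u v := G.Adj u v ∧ u ∉ s ∧ v ∉ s
  symm := ⟨fun u v ⟨h, hu, hv⟩ => ⟨h.symm, hv, hu⟩⟩
  loopless := ⟨fun u ⟨h, _, _⟩ => G.loopless.irrefl u h⟩

/-- `G` is a cactus graph: it is connected and each edge belongs to at most one cycle
(cycles being identified with their edge sets). -/
def IsCactus {V : Type*} (G : SimpleGraph V) : Prop :=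
  G.Connected ∧
    ∀ (u v : V) (c : G.Walk u u) (c' : G.Walk v v), c.IsCycle → c'.IsCycle →
      ∀ e, e ∈ c.edges → e ∈ c'.edges → {e' | e' ∈ c.edges} = {e' | e' ∈ c'.edges}

/-- With `T` the induced subgraph of `G` on `V(G) \ {y3,y4,y5}`, the set `T_a` of
vertices of `T` other than `y1, y2` joined to `ya` by a path in `T`. -/
def sideSet {V : Type*} (G : SimpleGraph V) (y1 y2 y3 y4 y5 ya : V) : Set V :=
  {z | z ∉ ({y1, y2, y3, y4, y5} : Set V) ∧
    (delGraph G {y3, y4, y5}).Reachable z ya}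

open SimpleGraph

section

variable {V : Type*} {G : SimpleGraph V}

lemma delGraph_le (s : Set V) : delGraph G s ≤ G :=
  fun _ _ h => h.1

lemma SimpleGraph.Walk.notMem_of_mem_support_delGraph {s : Set V} {u v : V}
    (w : (delGraph G s).Walk u v) (hu : u ∉ s) {x : V} (hx : x ∈ w.support) : x ∉ s := by
  induction w with
  | nil => rwa [Walk.mem_support_nil_iff.1 hx]
  | cons h _ ih =>
    rcases List.mem_cons.1 (Walk.support_cons _ _ ▸ hx) with rfl | hx
    exacts [hu, ih h.2.2 hx]

/-- Cut the walk at its first vertex in `B`: before that point it cannot enter `s`. -/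
lemma SimpleGraph.Walk.exists_mem_reachable_delGraph {s B : Set V}
    (hB : ∀ x ∈ s, ∀ z, G.Adj x z → z ∉ s → z ∈ B) {z w : V} (p : G.Walk z w)
    (hz : z ∉ s) (hw : w ∈ B) : ∃ b ∈ B, (delGraph G s).Reachable z b := by
  induction p with
  | nil => exact ⟨_, hw, .rfl⟩
  | @cons z u _ h _ ih =>
    by_cases hzB : z ∈ B
    · exact ⟨z, hzB, .rfl⟩
    have hu : u ∉ s := fun hu => hzB (hB u hu z h.symm hz)
    obtain ⟨b, hb, hub⟩ := ih hu hw
    exact ⟨b, hb, (show (delGraph G s).Adj z u from ⟨h, hz, hu⟩).reachable.trans hub⟩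

lemma SimpleGraph.Connected.exists_mem_reachable_delGraph (hG : G.Connected) {s B : Set V}
    (hB : ∀ x ∈ s, ∀ z, G.Adj x z → z ∉ s → z ∈ B) {b₀ : V} (hb₀ : b₀ ∈ B) {z : V}
    (hz : z ∉ s) : ∃ b ∈ B, (delGraph G s).Reachable z b :=
  (hG z b₀).elim fun p => p.exists_mem_reachable_delGraph hB hz hb₀

lemma SimpleGraph.Walk.IsPath.cons_cons_isCycle {u v a : V} {p : G.Walk v u} (hp : p.IsPath)
    (hua : G.Adj u a) (hav : G.Adj a v) (ha : a ∉ p.support) (huv : u ≠ v) :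
    (Walk.cons hua (Walk.cons hav p)).IsCycle := by
  refine (Walk.cons_isCycle_iff _ _).2 ⟨hp.cons ha, ?_⟩
  rw [Walk.edges_cons, List.mem_cons, not_or]
  refine ⟨fun h => huv ?_, fun h => ha (p.snd_mem_support_of_mem_edges h)⟩
  rcases Sym2.eq_iff.1 h with ⟨rfl, -⟩ | ⟨huv, -⟩
  exacts [(hua.ne rfl).elim, huv]

/-- Both paths close up through `a` to cycles sharing the edge `ua`. -/
lemma IsCactus.mem_edges_of_isPath (hG : IsCactus G) {u v a : V} (hua : G.Adj u a)
    (hav : G.Adj a v) (huv : u ≠ v) {p q : G.Walk v u} (hp : p.IsPath) (hq : q.IsPath)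
    (hap : a ∉ p.support) (haq : a ∉ q.support) {e : Sym2 V} (he : e ∈ p.edges) :
    e ∈ q.edges := by
  have hcycles := hG.2 u u _ _ (hp.cons_cons_isCycle hua hav hap huv)
    (hq.cons_cons_isCycle hua hav haq huv) s(u, a) (by simp) (by simp)
  have he' : e ∈ (Walk.cons hua (Walk.cons hav q)).edges := by
    have : e ∈ {e' | e' ∈ (Walk.cons hua (Walk.cons hav p)).edges} := by simp [he]
    rwa [hcycles] at this
  have hae : a ∉ e := fun ha => hap (p.mem_support_of_mem_edges he ha)
  rw [Walk.edges_cons, Walk.edges_cons, List.mem_cons, List.mem_cons] at he'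
  rcases he' with rfl | rfl | he'
  exacts [(hae (Sym2.mem_mk_right u a)).elim, (hae (Sym2.mem_mk_left a v)).elim, he']

lemma IsCactus.not_reachable_delGraph (hG : IsCactus G) {u v a x : V} (hua : G.Adj u a)
    (hav : G.Adj a v) (huv : u ≠ v) {p : G.Walk v u} (hp : p.IsPath) (hap : a ∉ p.support)
    {e : Sym2 V} (he : e ∈ p.edges) (hxe : x ∈ e) {s : Set V} (has : a ∈ s) (hxs : x ∈ s)
    (hv : v ∉ s) : ¬ (delGraph G s).Reachable v u := by
  intro hr
  obtain ⟨q, hq⟩ := hr.exists_isPath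
  have hqs : ∀ y ∈ (q.mapLe (delGraph_le s)).support, y ∉ s := by
    rw [Walk.support_mapLe_eq_support]
    exact fun y hy => q.notMem_of_mem_support_delGraph hv hy
  have he' := hG.mem_edges_of_isPath hua hav huv hp (hq.mapLe (delGraph_le s)) hap
    (fun h => hqs a h has) he
  exact hqs x (Walk.mem_support_of_mem_edges he' hxe) hxs

end

section

variable {V : Type*} (G : SimpleGraph V) (y1 y2 y3 y4 y5 : V)

lemma disjoint_sideSet_pair (ya : V) : Disjoint (sideSet G y1 y2 y3 y4 y5 ya) {y1, y2} :=
  Set.disjoint_left.2 fun _ hz hz' => hz.1 (by rcases hz' with rfl | rfl <;> simp)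

variable {G y1 y2 y3 y4 y5}

lemma disjoint_sideSet_sideSet (h : ¬ (delGraph G {y3, y4, y5}).Reachable y2 y1) :
    Disjoint (sideSet G y1 y2 y3 y4 y5 y1) (sideSet G y1 y2 y3 y4 y5 y2) :=
  Set.disjoint_left.2 fun _ hz1 hz2 => h (hz2.2.symm.trans hz1.2)

lemma sideSet_subset_compl (ya : V) : sideSet G y1 y2 y3 y4 y5 ya ⊆ {y3, y4, y5}ᶜ :=
  fun _ hz h => hz.1 (by rcases h with rfl | rfl | rfl <;> simp)

lemma sideSet_union_pair_union_sideSet (hy1 : y1 ∉ ({y3, y4, y5} : Set V))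
    (hy2 : y2 ∉ ({y3, y4, y5} : Set V))
    (hcover : ∀ z ∉ ({y3, y4, y5} : Set V),
      ∃ b ∈ ({y1, y2} : Set V), (delGraph G {y3, y4, y5}).Reachable z b) :
    sideSet G y1 y2 y3 y4 y5 y1 ∪ {y1, y2} ∪ sideSet G y1 y2 y3 y4 y5 y2 = {y3, y4, y5}ᶜ := by
  refine subset_antisymm (Set.union_subset (Set.union_subset (sideSet_subset_compl _) ?_)
    (sideSet_subset_compl _)) fun z hz => ?_
  · rintro _ (rfl | rfl)
    exacts [hy1, hy2]
  by_cases hz12 : z ∈ ({y1, y2} : Set V)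
  · exact Or.inl (Or.inr hz12)
  have hz' : z ∉ ({y1, y2, y3, y4, y5} : Set V) := by
    simp only [Set.mem_insert_iff, Set.mem_singleton_iff, Set.mem_compl_iff] at hz hz12 ⊢
    tauto
  obtain ⟨b, rfl | rfl, hzb⟩ := hcover z hz
  exacts [Or.inl (Or.inl ⟨hz', hzb⟩), Or.inr ⟨hz', hzb⟩]

end

theorem sideSets_partition_general {V : Type*} (G : SimpleGraph V)
    (y1 y2 y3 y4 y5 : V)
    (hcactus : IsCactus G)
    (hne : List.Pairwise Ne [y1, y2, y3, y4, y5])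
    (h14 : G.Adj y1 y4) (h42 : G.Adj y4 y2) (h23 : G.Adj y2 y3)
    (h35 : G.Adj y3 y5) (h51 : G.Adj y5 y1)
    (hy3 : ∀ z, G.Adj y3 z → z = y2 ∨ z = y5)
    (hy4 : ∀ z, G.Adj y4 z → z = y1 ∨ z = y2)
    (hy5 : ∀ z, G.Adj y5 z → z = y3 ∨ z = y1)
    (T1 T2 : Set V)
    (hT1 : T1 = sideSet G y1 y2 y3 y4 y5 y1)
    (hT2 : T2 = sideSet G y1 y2 y3 y4 y5 y2) :
    Disjoint T1 T2 ∧ Disjoint T1 ({y1, y2} : Set V) ∧ Disjoint T2 ({y1, y2} : Set V) ∧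
      T1 ∪ ({y1, y2} : Set V) ∪ T2 = ({y3, y4, y5} : Set V)ᶜ := by
  simp only [List.pairwise_cons, List.mem_cons, List.not_mem_nil, or_false, List.Pairwise.nil,
    and_true, forall_eq_or_imp, forall_eq, IsEmpty.forall_iff, implies_true] at hne
  obtain ⟨⟨n12, n13, n14, n15⟩, ⟨n23, n24, n25⟩, ⟨n34, n35⟩, n45⟩ := hne
  subst hT1 hT2
  have hpath : (Walk.cons h23 (Walk.cons h35 (Walk.cons h51 Walk.nil))).IsPath := by
    simp [Walk.isPath_def, n23, n25, n12.symm, n35, n13.symm, n15.symm]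
  have hsep : ¬ (delGraph G {y3, y4, y5}).Reachable y2 y1 :=
    hcactus.not_reachable_delGraph h14 h42 n12 hpath (by simp [n24.symm, n34.symm, n45, n14.symm])
      (e := s(y2, y3)) (by simp) (Sym2.mem_mk_right y2 y3) (by simp) (by simp) (by simp [*])
  have hboundary : ∀ x ∈ ({y3, y4, y5} : Set V), ∀ z, G.Adj x z →
      z ∉ ({y3, y4, y5} : Set V) → z ∈ ({y1, y2} : Set V) := by
    rintro x (rfl | rfl | rfl) z hxz hz
    · rcases hy3 z hxz with rfl | rfl <;> simp_all
    · rcases hy4 z hxz with rfl | rfl <;> simp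
    · rcases hy5 z hxz with rfl | rfl <;> simp_all
  exact ⟨disjoint_sideSet_sideSet hsep, disjoint_sideSet_pair .., disjoint_sideSet_pair ..,
    sideSet_union_pair_union_sideSet (by simp [*]) (by simp [*]) fun z hz =>
      hcactus.1.exists_mem_reachable_delGraph hboundary (Set.mem_insert y1 {y2}) hz⟩

/-- For a cactus graph `G` with a basic 5-cycle `y1,y4,y2,y3,y5` (cyclic order,
`y3,y4,y5` of degree 2), the sets `T_1` and `T_2` are disjoint and `V(T)` is the
disjoint union of `T_1`, `{y1, y2}` and `T_2`. -/
theorem sideSets_partition {V : Type*} (G : SimpleGraph V)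
    (y1 y2 y3 y4 y5 : V)
    (hcactus : IsCactus G)
    (hne : List.Pairwise Ne [y1, y2, y3, y4, y5])
    (h14 : G.Adj y1 y4) (h42 : G.Adj y4 y2) (h23 : G.Adj y2 y3)
    (h35 : G.Adj y3 y5) (h51 : G.Adj y5 y1)
    (h12 : ¬ G.Adj y1 y2)
    (hy3 : ∀ z, G.Adj y3 z → z = y2 ∨ z = y5)
    (hy4 : ∀ z, G.Adj y4 z → z = y1 ∨ z = y2)
    (hy5 : ∀ z, G.Adj y5 z → z = y3 ∨ z = y1)
    (T1 T2 : Set V)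
    (hT1 : T1 = sideSet G y1 y2 y3 y4 y5 y1)
    (hT2 : T2 = sideSet G y1 y2 y3 y4 y5 y2) :
    Disjoint T1 T2 ∧ Disjoint T1 ({y1, y2} : Set V) ∧ Disjoint T2 ({y1, y2} : Set V) ∧
      T1 ∪ ({y1, y2} : Set V) ∪ T2 = ({y3, y4, y5} : Set V)ᶜ :=
  sideSets_partition_general G y1 y2 y3 y4 y5 hcactus hne h14 h42 h23 h35 h51 hy3 hy4 hy5 T1 T2 hT1
    hT2
end

section
/- Let G be a cactus graph with basic 5-cycle on y1,y4,y2,y3,y5 (cyclic order, y3,y4,y5 of degree 2), with T, T_1, T_2 as above. Suppose S1 = {y3,y4,y5} ∪ U1 ∪ U2 and S2 = {y1,y2,y5} ∪ V1 ∪ V2 are vertex covers of G with U_a, V_a ⊆ T_a for a = 1,2. Then W1 = {y2,y4,y5} ∪ U1 ∪ V2 and W2 = {y1,y3,y4} ∪ V1 ∪ U2 are also vertex covers of G. -/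
section

open SimpleGraph

variable {V : Type*} {G : SimpleGraph V}

lemma IsVC.anti {H : SimpleGraph V} {C : Set V} (hHG : H ≤ G) (hC : IsVC G C) : IsVC H C :=
  fun _ _ h => hC (hHG h)

lemma isVC_of_isVC_delGraph {s C : Set V} (hs : ∀ z ∈ s, ∀ w, G.Adj z w → z ∈ C ∨ w ∈ C)
    (hC : IsVC (delGraph G s) C) : IsVC G C := by
  intro u v huv
  by_cases hu : u ∈ s
  · exact hs u hu v huv
  by_cases hv : v ∈ s
  · exact (hs v hv u huv.symm).symm
  exact hC ⟨huv, hu, hv⟩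

lemma notMem_of_mem_support_delGraph {s : Set V} {a b z : V} (w : (delGraph G s).Walk a b)
    (ha : a ∉ s) (hz : z ∈ w.support) : z ∉ s := by
  induction w with
  | nil =>
    rw [Walk.support_nil, List.mem_singleton] at hz
    rwa [hz]
  | cons h p ih =>
    rcases List.mem_cons.1 (Walk.support_cons _ _ ▸ hz) with rfl | hz
    · exact ha
    · exact ih h.2.2 hz

lemma exists_isPath_of_reachable_delGraph {s : Set V} {a b : V} (ha : a ∉ s)
    (h : (delGraph G s).Reachable a b) :
    ∃ q : G.Walk a b, q.IsPath ∧ ∀ z ∈ q.support, z ∉ s := by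
  classical
  obtain ⟨w⟩ := h
  refine ⟨w.bypass.mapLe (delGraph_le s), w.bypass_isPath.mapLe _, fun z hz => ?_⟩
  rw [Walk.support_mapLe_eq_support] at hz
  exact notMem_of_mem_support_delGraph _ ha hz

lemma SimpleGraph.Walk.IsPath.cons_concat_isCycle {a b x : V} {q : G.Walk a b} (hq : q.IsPath)
    (hx : x ∉ q.support) (hab : a ≠ b) (hbx : G.Adj b x) (hxa : G.Adj x a) :
    (Walk.cons hxa (q.concat hbx)).IsCycle := by
  refine (Walk.cons_isCycle_iff _ _).2 ⟨hq.concat hx hbx, fun he => ?_⟩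
  rw [Walk.edges_concat, List.concat_eq_append, List.mem_append, List.mem_singleton] at he
  rcases he with he | he
  · exact hx (q.fst_mem_support_of_mem_edges he)
  · rcases Sym2.eq_iff.1 he with ⟨rfl, -⟩ | ⟨-, rfl⟩
    · exact hx q.end_mem_support
    · exact hab rfl

lemma IsCactus.not_reachable_delGraph_s13 {y1 y2 y3 y4 y5 : V} (hG : IsCactus G)
    (hne : List.Pairwise Ne [y1, y2, y3, y4, y5])
    (h14 : G.Adj y1 y4) (h42 : G.Adj y4 y2) (h23 : G.Adj y2 y3)
    (h35 : G.Adj y3 y5) (h51 : G.Adj y5 y1) :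
    ¬ (delGraph G {y3, y4, y5}).Reachable y1 y2 := by
  obtain ⟨⟨n12, n13, n14, n15, -⟩, ⟨n23, -, n25, -⟩, ⟨n34, n35, -⟩, ⟨n45, -⟩, -⟩ := by
    simpa only [List.pairwise_cons, List.mem_cons, forall_eq_or_imp, List.not_mem_nil,
      List.Pairwise.nil] using hne
  intro hreach
  obtain ⟨q, hq, hqs⟩ := exists_isPath_of_reachable_delGraph (by simp [n13, n14, n15]) hreach
  have hy3 : y3 ∉ q.support := fun h => hqs _ h (by simp)
  have hy4 : y4 ∉ q.support := fun h => hqs _ h (by simp)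
  have hy5 : y5 ∉ q.support := fun h => hqs _ h (by simp)
  have hc₁ := hq.cons_concat_isCycle hy4 n12 h42.symm h14.symm
  have hc₂ := (hq.concat hy3 h23).cons_concat_isCycle
    (by simp [Walk.support_concat, hy5, n35.symm]) n13 h35 h51
  obtain ⟨e, he⟩ := List.exists_mem_of_ne_nil q.edges (Walk.edges_eq_nil.not.2 fun h => n12 h.eq)
  have hedges := hG.2 _ _ _ _ hc₁ hc₂ e (by simp [he]) (by simp [he])
  have h24 : s(y2, y4) ∈ {e' | e' ∈ (Walk.cons h14.symm (q.concat h42.symm)).edges} := by simp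
  rw [hedges] at h24
  exact hy4 (q.snd_mem_support_of_mem_edges
    (by simpa [Walk.edges_concat, n25, n34.symm, n45, n23] using h24))

lemma mem_of_adj_of_not_reachable {T : SimpleGraph V} {X A B : Set V} {b u v : V}
    (hC : IsVC T (X ∪ A ∪ B)) (hB : ∀ z ∈ B, T.Reachable z b) (huv : T.Adj u v)
    (hu : u ∉ X) (hv : v ∉ X) (hub : ¬ T.Reachable u b) : u ∈ A ∨ v ∈ A := by
  rcases hC huv with ((huX | huA) | huB) | ((hvX | hvA) | hvB)
  · exact absurd huX hu
  · exact Or.inl huA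
  · exact absurd (hB u huB) hub
  · exact absurd hvX hv
  · exact Or.inr hvA
  · exact absurd (huv.reachable.trans (hB v hvB)) hub

variable {y1 y2 y3 y4 y5 : V} {U1 U2 V1 V2 : Set V}

lemma isVC_swap_fst (key : ¬ (delGraph G {y3, y4, y5}).Reachable y1 y2)
    (hy3 : ∀ z, G.Adj y3 z → z = y2 ∨ z = y5)
    (hU2 : U2 ⊆ sideSet G y1 y2 y3 y4 y5 y2) (hV1 : V1 ⊆ sideSet G y1 y2 y3 y4 y5 y1)
    (hS1 : IsVC G (({y3, y4, y5} : Set V) ∪ U1 ∪ U2))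
    (hS2 : IsVC G (({y1, y2, y5} : Set V) ∪ V1 ∪ V2)) :
    IsVC G (({y2, y4, y5} : Set V) ∪ U1 ∪ V2) := by
  refine isVC_of_isVC_delGraph (s := {y3, y4, y5}) ?_ fun u v huv => ?_
  · simp only [Set.mem_insert_iff, Set.mem_singleton_iff]
    rintro z (rfl | rfl | rfl) w hw
    · rcases hy3 w hw with rfl | rfl <;> simp
    · simp
    · simp
  have hu : u ∉ ({y3, y4, y5} : Set V) := huv.2.1
  have hv : v ∉ ({y3, y4, y5} : Set V) := huv.2.2
  by_cases hu2 : u = y2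
  · simp [hu2]
  by_cases hv2 : v = y2
  · simp [hv2]
  by_cases hreach : (delGraph G {y3, y4, y5}).Reachable u y2
  · have hX : ∀ z, (delGraph G {y3, y4, y5}).Reachable z y2 → z ∉ ({y3, y4, y5} : Set V) →
        z ≠ y2 → z ∉ ({y1, y2, y5} : Set V) := by
      rintro z hz hzs hz2 (rfl | rfl | rfl)
      exacts [key hz, hz2 rfl, hzs (by simp)]
    rw [Set.union_right_comm] at hS2
    exact (mem_of_adj_of_not_reachable (hS2.anti (delGraph_le _)) (fun z hz => (hV1 hz).2) huv
      (hX u hreach hu hu2) (hX v (huv.symm.reachable.trans hreach) hv hv2)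
      fun h => key (h.symm.trans hreach)).imp Or.inr Or.inr
  · exact (mem_of_adj_of_not_reachable (hS1.anti (delGraph_le _)) (fun z hz => (hU2 hz).2) huv
      hu hv hreach).imp (Or.inl ∘ Or.inr) (Or.inl ∘ Or.inr)

lemma isVC_swap_snd (key : ¬ (delGraph G {y3, y4, y5}).Reachable y1 y2)
    (hy5 : ∀ z, G.Adj y5 z → z = y3 ∨ z = y1)
    (hU1 : U1 ⊆ sideSet G y1 y2 y3 y4 y5 y1) (hV2 : V2 ⊆ sideSet G y1 y2 y3 y4 y5 y2)
    (hS1 : IsVC G (({y3, y4, y5} : Set V) ∪ U1 ∪ U2))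
    (hS2 : IsVC G (({y1, y2, y5} : Set V) ∪ V1 ∪ V2)) :
    IsVC G (({y1, y3, y4} : Set V) ∪ V1 ∪ U2) := by
  refine isVC_of_isVC_delGraph (s := {y3, y4, y5}) ?_ fun u v huv => ?_
  · simp only [Set.mem_insert_iff, Set.mem_singleton_iff]
    rintro z (rfl | rfl | rfl) w hw
    · simp
    · simp
    · rcases hy5 w hw with rfl | rfl <;> simp
  have hu : u ∉ ({y3, y4, y5} : Set V) := huv.2.1
  have hv : v ∉ ({y3, y4, y5} : Set V) := huv.2.2
  by_cases hu1 : u = y1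
  · simp [hu1]
  by_cases hv1 : v = y1
  · simp [hv1]
  by_cases hreach : (delGraph G {y3, y4, y5}).Reachable u y1
  · have hX : ∀ z, (delGraph G {y3, y4, y5}).Reachable z y1 → z ∉ ({y3, y4, y5} : Set V) →
        z ≠ y1 → z ∉ ({y1, y2, y5} : Set V) := by
      rintro z hz hzs hz1 (rfl | rfl | rfl)
      exacts [hz1 rfl, key hz.symm, hzs (by simp)]
    exact (mem_of_adj_of_not_reachable (hS2.anti (delGraph_le _)) (fun z hz => (hV2 hz).2) huv
      (hX u hreach hu hu1) (hX v (huv.symm.reachable.trans hreach) hv hv1)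
      fun h => key (hreach.symm.trans h)).imp (Or.inl ∘ Or.inr) (Or.inl ∘ Or.inr)
  · rw [Set.union_right_comm] at hS1
    exact (mem_of_adj_of_not_reachable (hS1.anti (delGraph_le _)) (fun z hz => (hU1 hz).2) huv
      hu hv hreach).imp Or.inr Or.inr

end

theorem swap_covers_case_yi4_general {V : Type*} (G : SimpleGraph V)
    (y1 y2 y3 y4 y5 : V)
    (hcactus : IsCactus G)
    (hne : List.Pairwise Ne [y1, y2, y3, y4, y5])
    (h14 : G.Adj y1 y4) (h42 : G.Adj y4 y2) (h23 : G.Adj y2 y3)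
    (h35 : G.Adj y3 y5) (h51 : G.Adj y5 y1)
    (hy3 : ∀ z, G.Adj y3 z → z = y2 ∨ z = y5)
    (hy5 : ∀ z, G.Adj y5 z → z = y3 ∨ z = y1)
    (U1 U2 V1 V2 : Set V)
    (hU1 : U1 ⊆ sideSet G y1 y2 y3 y4 y5 y1) (hU2 : U2 ⊆ sideSet G y1 y2 y3 y4 y5 y2)
    (hV1 : V1 ⊆ sideSet G y1 y2 y3 y4 y5 y1) (hV2 : V2 ⊆ sideSet G y1 y2 y3 y4 y5 y2)
    (hS1 : IsVC G (({y3, y4, y5} : Set V) ∪ U1 ∪ U2))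
    (hS2 : IsVC G (({y1, y2, y5} : Set V) ∪ V1 ∪ V2)) :
    IsVC G (({y2, y4, y5} : Set V) ∪ U1 ∪ V2) ∧
      IsVC G (({y1, y3, y4} : Set V) ∪ V1 ∪ U2) := by
  have key := hcactus.not_reachable_delGraph_s13 hne h14 h42 h23 h35 h51
  exact ⟨isVC_swap_fst key hy3 hU2 hV1 hS1 hS2, isVC_swap_snd key hy5 hU1 hV2 hS1 hS2⟩

/-- Swapping the side parts of two vertex covers: if `S1 = {y3,y4,y5} ∪ U1 ∪ U2` and
`S2 = {y1,y2,y5} ∪ V1 ∪ V2` are vertex covers of `G` (with `Ua, Va ⊆ T_a`), then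
`W1 = {y2,y4,y5} ∪ U1 ∪ V2` and `W2 = {y1,y3,y4} ∪ V1 ∪ U2` are vertex covers too. -/
theorem swap_covers_case_yi4 {V : Type*} (G : SimpleGraph V)
    (y1 y2 y3 y4 y5 : V)
    (hcactus : IsCactus G)
    (hne : List.Pairwise Ne [y1, y2, y3, y4, y5])
    (h14 : G.Adj y1 y4) (h42 : G.Adj y4 y2) (h23 : G.Adj y2 y3)
    (h35 : G.Adj y3 y5) (h51 : G.Adj y5 y1)
    (h12 : ¬ G.Adj y1 y2)
    (hy3 : ∀ z, G.Adj y3 z → z = y2 ∨ z = y5)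
    (hy4 : ∀ z, G.Adj y4 z → z = y1 ∨ z = y2)
    (hy5 : ∀ z, G.Adj y5 z → z = y3 ∨ z = y1)
    (U1 U2 V1 V2 : Set V)
    (hU1 : U1 ⊆ sideSet G y1 y2 y3 y4 y5 y1) (hU2 : U2 ⊆ sideSet G y1 y2 y3 y4 y5 y2)
    (hV1 : V1 ⊆ sideSet G y1 y2 y3 y4 y5 y1) (hV2 : V2 ⊆ sideSet G y1 y2 y3 y4 y5 y2)
    (hS1 : IsVC G (({y3, y4, y5} : Set V) ∪ U1 ∪ U2))
    (hS2 : IsVC G (({y1, y2, y5} : Set V) ∪ V1 ∪ V2)) :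
    IsVC G (({y2, y4, y5} : Set V) ∪ U1 ∪ V2) ∧
      IsVC G (({y1, y3, y4} : Set V) ∪ V1 ∪ U2) :=
  swap_covers_case_yi4_general G y1 y2 y3 y4 y5 hcactus hne h14 h42 h23 h35 h51 hy3 hy5 U1 U2 V1 V2
    hU1 hU2 hV1 hV2 hS1 hS2
end
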